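/- Let L > 0, let w : ℝ³ → ℝ be twice continuously differentiable and L-periodic in the first two variables with w(x,y,0) = 0 and ∂w/∂z(x,y,0) = 0 for all (x,y), and let θ : ℝ³ → ℝ be continuously differentiable, L-periodic in the first two variables, with θ(x,y,0) = 0 for all (x,y). Then for every z ∈ [0,1], | (1/L²)·∫₀^L∫₀^L w(x,y,z)·θ(x,y,z) dx dy | ≤ z^(5/2) · (sup over [0,L]²×[0,1] of |∂²w/∂z²|) · ‖∇θ‖, where ‖F‖² = (1/L²)·∫₀^L∫₀^L∫₀^1 |F(x,y,z)|² dx dy dz. -/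

import Mathlib

set_option maxHeartbeats 1000000

open MeasureTheory intervalIntegral Set

noncomputable def pd1 (f : ℝ × ℝ × ℝ → ℝ) : ℝ × ℝ × ℝ → ℝ := fun p => fderiv ℝ f p (1,0,0)
noncomputable def pd2 (f : ℝ × ℝ × ℝ → ℝ) : ℝ × ℝ × ℝ → ℝ := fun p => fderiv ℝ f p (0,1,0)
noncomputable def pd3 (f : ℝ × ℝ × ℝ → ℝ) : ℝ × ℝ × ℝ → ℝ := fun p => fderiv ℝ f p (0,0,1)

lemma hasDerivAt_slice3 (f : ℝ × ℝ × ℝ → ℝ) (hf : Differentiable ℝ f) (x y s : ℝ) :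
    HasDerivAt (fun t => f (x, y, t)) (pd3 f (x, y, s)) s := by
  have h1 : HasDerivAt (fun t : ℝ => ((x : ℝ), (y : ℝ), t)) ((0 : ℝ), (0 : ℝ), (1 : ℝ)) s :=
    (hasDerivAt_const s x).prodMk ((hasDerivAt_const s y).prodMk (hasDerivAt_id s))
  exact (hf (x, y, s)).hasFDerivAt.comp_hasDerivAt s h1

lemma hasDerivAt_slice1 (f : ℝ × ℝ × ℝ → ℝ) (hf : Differentiable ℝ f) (x y s : ℝ) :
    HasDerivAt (fun t => f (t, y, s)) (pd1 f (x, y, s)) x := by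
  have h1 : HasDerivAt (fun t : ℝ => (t, (y : ℝ), (s : ℝ))) ((1 : ℝ), (0 : ℝ), (0 : ℝ)) x :=
    (hasDerivAt_id x).prodMk ((hasDerivAt_const x y).prodMk (hasDerivAt_const x s))
  exact (hf (x, y, s)).hasFDerivAt.comp_hasDerivAt x h1

lemma hasDerivAt_slice2 (f : ℝ × ℝ × ℝ → ℝ) (hf : Differentiable ℝ f) (x y s : ℝ) :
    HasDerivAt (fun t => f (x, t, s)) (pd2 f (x, y, s)) y := by
  have h1 : HasDerivAt (fun t : ℝ => ((x : ℝ), t, (s : ℝ))) ((0 : ℝ), (1 : ℝ), (0 : ℝ)) y :=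
    (hasDerivAt_const y x).prodMk ((hasDerivAt_id y).prodMk (hasDerivAt_const y s))
  exact (hf (x, y, s)).hasFDerivAt.comp_hasDerivAt y h1

lemma continuous_pd3 (f : ℝ × ℝ × ℝ → ℝ) (hf : ContDiff ℝ 1 f) : Continuous (pd3 f) :=
  (hf.continuous_fderiv one_ne_zero).clm_apply continuous_const

lemma continuous_pd1 (f : ℝ × ℝ × ℝ → ℝ) (hf : ContDiff ℝ 1 f) : Continuous (pd1 f) :=
  (hf.continuous_fderiv one_ne_zero).clm_apply continuous_const

lemma continuous_pd2 (f : ℝ × ℝ × ℝ → ℝ) (hf : ContDiff ℝ 1 f) : Continuous (pd2 f) :=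
  (hf.continuous_fderiv one_ne_zero).clm_apply continuous_const

lemma contDiff_pd3 (f : ℝ × ℝ × ℝ → ℝ) (hf : ContDiff ℝ 2 f) : ContDiff ℝ 1 (pd3 f) := by
  have h := hf.fderiv_right (m := 1) (by norm_num)
  exact h.clm_apply contDiff_const

lemma cs1 {a : ℝ} (ha : 0 ≤ a) {g : ℝ → ℝ} (hg : Continuous g) :
    ∫ t in (0:ℝ)..a, |g t| ≤ Real.sqrt a * Real.sqrt (∫ t in (0:ℝ)..a, (g t) ^ 2) := by
  rcases ha.eq_or_lt with h | h
  · simp [← h]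
  set I := ∫ t in (0:ℝ)..a, |g t| with hIdef
  set J := ∫ t in (0:ℝ)..a, (g t) ^ 2 with hJdef
  have hInn : 0 ≤ I := intervalIntegral.integral_nonneg ha fun t _ => abs_nonneg _
  have hJnn : 0 ≤ J := intervalIntegral.integral_nonneg ha fun t _ => sq_nonneg _
  set c := I / a with hc
  have hint1 : IntervalIntegrable (fun t => (g t) ^ 2) volume 0 a := (hg.pow 2).intervalIntegrable _ _
  have hint2 : IntervalIntegrable (fun t => 2 * c * |g t|) volume 0 a :=
    (continuous_const.mul hg.abs).intervalIntegrable _ _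
  have key : 0 ≤ ∫ t in (0:ℝ)..a, (|g t| - c) ^ 2 :=
    intervalIntegral.integral_nonneg ha fun t _ => sq_nonneg _
  have expand : ∫ t in (0:ℝ)..a, (|g t| - c) ^ 2 = J - 2 * c * I + c ^ 2 * a := by
    have e1 : (fun t => (|g t| - c) ^ 2) = fun t => ((g t) ^ 2 - 2 * c * |g t|) + c ^ 2 := by
      funext t; rw [sub_sq, sq_abs]; ring
    rw [e1, intervalIntegral.integral_add (hint1.sub hint2) intervalIntegrable_const,
      intervalIntegral.integral_sub hint1 hint2, intervalIntegral.integral_const_mul,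
      intervalIntegral.integral_const]
    simp [hIdef, hJdef]
    ring
  rw [expand] at key
  have hsq : I ^ 2 ≤ a * J := by
    have ha' : a ≠ 0 := ne_of_gt h
    have h1 : J - 2 * c * I + c ^ 2 * a = J - I ^ 2 / a := by
      rw [hc]; field_simp; ring
    rw [h1] at key
    have h2 : I ^ 2 / a ≤ J := by linarith
    have := (div_le_iff₀ h).mp h2
    linarith
  calc I = Real.sqrt (I ^ 2) := (Real.sqrt_sq hInn).symm
    _ ≤ Real.sqrt (a * J) := Real.sqrt_le_sqrt hsq
    _ = Real.sqrt a * Real.sqrt J := Real.sqrt_mul ha _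

lemma biSup_le_real {f : ℝ → ℝ} {S : Set ℝ} {C : ℝ} (hC0 : 0 ≤ C) (hC : ∀ t ∈ S, f t ≤ C) :
    ⨆ t ∈ S, f t ≤ C := by
  apply ciSup_le
  intro t
  by_cases h : t ∈ S
  · rw [ciSup_pos h]; exact hC t h
  · have : IsEmpty (t ∈ S) := ⟨h⟩
    rw [Real.iSup_of_isEmpty]
    exact hC0

lemma le_biSup_real {f : ℝ → ℝ} {S : Set ℝ} {C : ℝ} (hC : ∀ t ∈ S, f t ≤ C) {t : ℝ}
    (ht : t ∈ S) : f t ≤ ⨆ s ∈ S, f s := by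
  have hb : ∀ s : ℝ, (⨆ _ : s ∈ S, f s) ≤ max C 0 := by
    intro s
    by_cases h : s ∈ S
    · rw [ciSup_pos h]; exact le_max_of_le_left (hC s h)
    · have : IsEmpty (s ∈ S) := ⟨h⟩
      rw [Real.iSup_of_isEmpty]; exact le_max_right _ _
  refine le_trans ?_ (le_ciSup (f := fun s => ⨆ _ : s ∈ S, f s) ⟨max C 0, ?_⟩ t)
  · rw [ciSup_pos ht]
  · rintro _ ⟨s, rfl⟩; exact hb s

/-- Squared norm of the gradient of a function of three real variables. -/
noncomputable def gradSq (f : ℝ → ℝ → ℝ → ℝ) (x y z : ℝ) : ℝ :=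
  (deriv (fun t => f t y z) x) ^ 2 + (deriv (fun t => f x t z) y) ^ 2 +
    (deriv (fun t => f x y t) z) ^ 2

/-- The squared `L²`-type norm `‖F‖² = (1/L²) ∫₀^L ∫₀^L ∫₀^1 F` over the period
cell `[0,L]² × [0,1]` (applied to an already-squared integrand). -/
noncomputable def cellAvg (L : ℝ) (F : ℝ → ℝ → ℝ → ℝ) : ℝ :=
  (1 / L ^ 2) * ∫ x in (0:ℝ)..L, ∫ y in (0:ℝ)..L, ∫ z in (0:ℝ)..1, F x y z

/-- Inequality (bb) of Constantin, "Bounds for Turbulent Transport": if `w` is `C²`,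
horizontally `L`-periodic, with `w = ∂w/∂z = 0` at `z = 0`, and `θ` is `C¹`,
horizontally `L`-periodic, vanishing at `z = 0`, then the horizontal average of
`w·θ` at height `z ∈ [0,1]` is bounded by `z^(5/2) ‖∂²w/∂z²‖_{L^∞} ‖∇θ‖`. -/
theorem horizontal_average_flux_bound (L : ℝ) (hL : 0 < L) (w θ : ℝ → ℝ → ℝ → ℝ)
    (hw : ContDiff ℝ 2 fun p : ℝ × ℝ × ℝ => w p.1 p.2.1 p.2.2)
    (hθ : ContDiff ℝ 1 fun p : ℝ × ℝ × ℝ => θ p.1 p.2.1 p.2.2)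
    (hwper : ∀ x y z : ℝ, w (x + L) y z = w x y z ∧ w x (y + L) z = w x y z)
    (hθper : ∀ x y z : ℝ, θ (x + L) y z = θ x y z ∧ θ x (y + L) z = θ x y z)
    (hw0 : ∀ x y : ℝ, w x y 0 = 0)
    (hwz0 : ∀ x y : ℝ, deriv (fun t => w x y t) 0 = 0)
    (hθ0 : ∀ x y : ℝ, θ x y 0 = 0)
    (z : ℝ) (hz : z ∈ Set.Icc (0:ℝ) 1) :
    |(1 / L ^ 2) * ∫ x in (0:ℝ)..L, ∫ y in (0:ℝ)..L, w x y z * θ x y z| ≤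
      z ^ ((5 : ℝ) / 2) *
        (⨆ x ∈ Set.Icc (0:ℝ) L, ⨆ y ∈ Set.Icc (0:ℝ) L, ⨆ s ∈ Set.Icc (0:ℝ) 1,
          |deriv (deriv (fun t => w x y t)) s|) *
        Real.sqrt (cellAvg L (gradSq θ)) := by
  obtain ⟨hz0, hz1⟩ := hz
  set F : ℝ × ℝ × ℝ → ℝ := fun p => w p.1 p.2.1 p.2.2 with hFdef
  set Θ : ℝ × ℝ × ℝ → ℝ := fun p => θ p.1 p.2.1 p.2.2 with hΘdef
  set wz := pd3 F with hwzdef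
  set wzz := pd3 wz with hwzzdef
  set θz := pd3 Θ with hθzdef
  have hwzC1 : ContDiff ℝ 1 wz := contDiff_pd3 F hw
  have hwzzC : Continuous wzz := continuous_pd3 wz hwzC1
  have hθzC : Continuous θz := continuous_pd3 Θ hθ
  have hcurve3 : ∀ x y : ℝ, Continuous fun t : ℝ => ((x : ℝ), (y : ℝ), t) := fun x y =>
    continuous_const.prodMk (continuous_const.prodMk continuous_id)
  have hmap2 : Continuous fun p : ℝ × ℝ => (p.1, p.2, z) :=
    continuous_fst.prodMk (continuous_snd.prodMk continuous_const)
  have hmap3 : Continuous fun q : (ℝ × ℝ) × ℝ => (q.1.1, q.1.2, q.2) :=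
    (continuous_fst.comp continuous_fst).prodMk
      ((continuous_snd.comp continuous_fst).prodMk continuous_snd)
  have hderiv_w : ∀ x y s : ℝ, HasDerivAt (fun t => w x y t) (wz (x, y, s)) s := fun x y s =>
    hasDerivAt_slice3 F (hw.differentiable (by norm_num)) x y s
  have hderiv_wz : ∀ x y s : ℝ, HasDerivAt (fun t => wz (x, y, t)) (wzz (x, y, s)) s :=
    fun x y s => hasDerivAt_slice3 wz (hwzC1.differentiable one_ne_zero) x y s
  have hderiv_θ : ∀ x y s : ℝ, HasDerivAt (fun t => θ x y t) (θz (x, y, s)) s := fun x y s =>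
    hasDerivAt_slice3 Θ (hθ.differentiable one_ne_zero) x y s
  have hwzz_eq : ∀ x y s : ℝ, deriv (deriv (fun t => w x y t)) s = wzz (x, y, s) := by
    intro x y s
    have h1 : deriv (fun t => w x y t) = fun s => wz (x, y, s) :=
      funext fun s => (hderiv_w x y s).deriv
    rw [h1]
    exact (hderiv_wz x y s).deriv
  set M := ⨆ x ∈ Set.Icc (0:ℝ) L, ⨆ y ∈ Set.Icc (0:ℝ) L, ⨆ s ∈ Set.Icc (0:ℝ) 1,
      |deriv (deriv (fun t => w x y t)) s| with hMdef
  have hMrw : M = ⨆ x ∈ Set.Icc (0:ℝ) L, ⨆ y ∈ Set.Icc (0:ℝ) L, ⨆ s ∈ Set.Icc (0:ℝ) 1,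
      |wzz (x, y, s)| := by
    rw [hMdef]; simp only [hwzz_eq]
  -- global bound for wzz on the compact cell
  obtain ⟨C, hC⟩ := (isCompact_Icc.prod (isCompact_Icc.prod isCompact_Icc) :
      IsCompact ((Set.Icc (0:ℝ) L) ×ˢ (Set.Icc (0:ℝ) L) ×ˢ (Set.Icc (0:ℝ) 1))).exists_bound_of_continuousOn
      hwzzC.continuousOn
  have hC' : ∀ x ∈ Set.Icc (0:ℝ) L, ∀ y ∈ Set.Icc (0:ℝ) L, ∀ s ∈ Set.Icc (0:ℝ) 1,
      |wzz (x, y, s)| ≤ C := by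
    intro x hx y hy s hs
    simpa [Real.norm_eq_abs] using hC (x, y, s) ⟨hx, hy, hs⟩
  have hC0 : 0 ≤ C := le_trans (abs_nonneg _)
    (hC' 0 ⟨le_rfl, hL.le⟩ 0 ⟨le_rfl, hL.le⟩ 0 ⟨le_rfl, zero_le_one⟩)
  have hMub : ∀ x ∈ Set.Icc (0:ℝ) L, ∀ y ∈ Set.Icc (0:ℝ) L, ∀ s ∈ Set.Icc (0:ℝ) 1,
      |wzz (x, y, s)| ≤ M := by
    intro x hx y hy s hs
    rw [hMrw]
    have step1 : |wzz (x, y, s)| ≤ ⨆ s ∈ Set.Icc (0:ℝ) 1, |wzz (x, y, s)| :=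
      le_biSup_real (fun t ht => hC' x hx y hy t ht) hs
    refine step1.trans ?_
    have step2 : (⨆ s ∈ Set.Icc (0:ℝ) 1, |wzz (x, y, s)|) ≤
        ⨆ y ∈ Set.Icc (0:ℝ) L, ⨆ s ∈ Set.Icc (0:ℝ) 1, |wzz (x, y, s)| :=
      le_biSup_real (f := fun y => ⨆ s ∈ Set.Icc (0:ℝ) 1, |wzz (x, y, s)|)
        (fun y' hy' => biSup_le_real hC0 (fun t ht => hC' x hx y' hy' t ht)) hy
    refine step2.trans ?_
    exact le_biSup_real (f := fun x => ⨆ y ∈ Set.Icc (0:ℝ) L, ⨆ s ∈ Set.Icc (0:ℝ) 1,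
        |wzz (x, y, s)|)
      (fun x' hx' => biSup_le_real hC0 (fun y' hy' =>
        biSup_le_real hC0 (fun t ht => hC' x' hx' y' hy' t ht))) hx
  have hM0 : 0 ≤ M := le_trans (abs_nonneg _)
    (hMub 0 ⟨le_rfl, hL.le⟩ 0 ⟨le_rfl, hL.le⟩ 0 ⟨le_rfl, zero_le_one⟩)
  -- pointwise bound on w
  have hwz_slice_cont : ∀ x y : ℝ, Continuous fun t : ℝ => wz (x, y, t) := fun x y =>
    hwzC1.continuous.comp (hcurve3 x y)
  have hwzz_slice_cont : ∀ x y : ℝ, Continuous fun t : ℝ => wzz (x, y, t) := fun x y =>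
    hwzzC.comp (hcurve3 x y)
  have hθz_slice_cont : ∀ x y : ℝ, Continuous fun t : ℝ => θz (x, y, t) := fun x y =>
    hθzC.comp (hcurve3 x y)
  have hwbound : ∀ x ∈ Set.Icc (0:ℝ) L, ∀ y ∈ Set.Icc (0:ℝ) L, |w x y z| ≤ M * z ^ 2 / 2 := by
    intro x hx y hy
    have hwz_s : ∀ s ∈ Set.Icc (0:ℝ) z, |wz (x, y, s)| ≤ M * s := by
      intro s hs
      have hft : ∫ t in (0:ℝ)..s, wzz (x, y, t) = wz (x, y, s) - wz (x, y, 0) :=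
        intervalIntegral.integral_eq_sub_of_hasDerivAt (fun t _ => hderiv_wz x y t)
          ((hwzz_slice_cont x y).intervalIntegrable _ _)
      have h0 : wz (x, y, 0) = 0 := by
        rw [← (hderiv_w x y 0).deriv]; exact hwz0 x y
      have hb : ‖∫ t in (0:ℝ)..s, wzz (x, y, t)‖ ≤ M * |s - 0| := by
        apply intervalIntegral.norm_integral_le_of_norm_le_const
        intro t ht
        rw [Set.uIoc_of_le hs.1] at ht
        rw [Real.norm_eq_abs]
        exact hMub x hx y hy t ⟨ht.1.le, ht.2.trans (hs.2.trans hz1)⟩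
      rw [hft, h0, sub_zero, Real.norm_eq_abs, sub_zero, abs_of_nonneg hs.1] at hb
      exact hb
    have hft2 : ∫ s in (0:ℝ)..z, wz (x, y, s) = w x y z - w x y 0 :=
      intervalIntegral.integral_eq_sub_of_hasDerivAt (fun s _ => hderiv_w x y s)
        ((hwz_slice_cont x y).intervalIntegrable _ _)
    calc |w x y z| = |∫ s in (0:ℝ)..z, wz (x, y, s)| := by
          rw [hft2, hw0, sub_zero]
      _ ≤ ∫ s in (0:ℝ)..z, |wz (x, y, s)| := by
          simpa [Real.norm_eq_abs] using
            intervalIntegral.norm_integral_le_integral_norm (f := fun s => wz (x, y, s)) hz0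
      _ ≤ ∫ s in (0:ℝ)..z, M * s := by
          apply intervalIntegral.integral_mono_on hz0
            ((hwz_slice_cont x y).abs.intervalIntegrable _ _)
            ((continuous_const.mul continuous_id).intervalIntegrable _ _) hwz_s
      _ = M * z ^ 2 / 2 := by
          rw [intervalIntegral.integral_const_mul, integral_id]
          ring
  -- pointwise bound on θ
  set G : ℝ → ℝ → ℝ := fun x y => Real.sqrt (∫ s in (0:ℝ)..1, (θz (x, y, s)) ^ 2) with hGdef
  have hGnn : ∀ x y : ℝ, 0 ≤ G x y := fun x y => Real.sqrt_nonneg _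
  have hθbound : ∀ x y : ℝ, |θ x y z| ≤ Real.sqrt z * G x y := by
    intro x y
    have hft : ∫ s in (0:ℝ)..z, θz (x, y, s) = θ x y z - θ x y 0 :=
      intervalIntegral.integral_eq_sub_of_hasDerivAt (fun s _ => hderiv_θ x y s)
        ((hθz_slice_cont x y).intervalIntegrable _ _)
    calc |θ x y z| = |∫ s in (0:ℝ)..z, θz (x, y, s)| := by
          rw [hft, hθ0, sub_zero]
      _ ≤ ∫ s in (0:ℝ)..z, |θz (x, y, s)| := by
          simpa [Real.norm_eq_abs] using
            intervalIntegral.norm_integral_le_integral_norm (f := fun s => θz (x, y, s)) hz0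
      _ ≤ Real.sqrt z * Real.sqrt (∫ s in (0:ℝ)..z, (θz (x, y, s)) ^ 2) :=
          cs1 hz0 (hθz_slice_cont x y)
      _ ≤ Real.sqrt z * G x y := by
          apply mul_le_mul_of_nonneg_left _ (Real.sqrt_nonneg z)
          apply Real.sqrt_le_sqrt
          apply intervalIntegral.integral_mono_interval le_rfl hz0 hz1
          · exact Filter.Eventually.of_forall fun s => sq_nonneg _
          · exact (((hθz_slice_cont x y).pow 2)).intervalIntegrable _ _
  -- product bound
  set c := M * z ^ 2 / 2 * Real.sqrt z with hcdef
  have hcnn : 0 ≤ c := by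
    apply mul_nonneg _ (Real.sqrt_nonneg z)
    exact div_nonneg (mul_nonneg hM0 (sq_nonneg z)) two_pos.le
  have hprod : ∀ x ∈ Set.Icc (0:ℝ) L, ∀ y ∈ Set.Icc (0:ℝ) L,
      |w x y z * θ x y z| ≤ c * G x y := by
    intro x hx y hy
    rw [abs_mul]
    calc |w x y z| * |θ x y z| ≤ (M * z ^ 2 / 2) * (Real.sqrt z * G x y) :=
          mul_le_mul (hwbound x hx y hy) (hθbound x y) (abs_nonneg _)
            (div_nonneg (mul_nonneg hM0 (sq_nonneg z)) two_pos.le)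
      _ = c * G x y := by rw [hcdef]; ring
  -- continuity facts
  have hInnc : Continuous fun p : ℝ × ℝ => ∫ s in (0:ℝ)..1, (θz (p.1, p.2, s)) ^ 2 :=
    intervalIntegral.continuous_parametric_intervalIntegral_of_continuous'
      (f := fun p : ℝ × ℝ => fun s => (θz (p.1, p.2, s)) ^ 2) (by have h := (hθzC.comp hmap3).pow 2; exact h) 0 1
  have hGc : Continuous fun p : ℝ × ℝ => G p.1 p.2 := Real.continuous_sqrt.comp hInnc
  have hwθc : Continuous fun p : ℝ × ℝ => w p.1 p.2 z * θ p.1 p.2 z :=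
    (hw.continuous.comp hmap2).mul (hθ.continuous.comp hmap2)
  set P : ℝ → ℝ := fun x => ∫ y in (0:ℝ)..L, w x y z * θ x y z with hPdef
  have hPc : Continuous P :=
    intervalIntegral.continuous_parametric_intervalIntegral_of_continuous'
      (f := fun x y => w x y z * θ x y z) hwθc 0 L
  have h1 : |∫ x in (0:ℝ)..L, P x| ≤ ∫ x in (0:ℝ)..L, |P x| := by
    simpa only [Real.norm_eq_abs] using
      intervalIntegral.norm_integral_le_integral_norm (f := P) (μ := volume) hL.le
  have h2 : ∀ x ∈ Set.Icc (0:ℝ) L, |P x| ≤ ∫ y in (0:ℝ)..L, c * G x y := by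
    intro x hx
    have h2a : |P x| ≤ ∫ y in (0:ℝ)..L, |w x y z * θ x y z| := by
      simpa only [Real.norm_eq_abs] using intervalIntegral.norm_integral_le_integral_norm
        (f := fun y => w x y z * θ x y z) (μ := volume) hL.le
    refine h2a.trans (intervalIntegral.integral_mono_on hL.le ?_ ?_ fun y hy => hprod x hx y hy)
    · exact ((hwθc.comp (Continuous.prodMk_right x)).abs).intervalIntegrable _ _
    · exact (continuous_const.mul
        (hGc.comp (Continuous.prodMk_right x))).intervalIntegrable _ _
  have hRHSc : Continuous fun x : ℝ => ∫ y in (0:ℝ)..L, c * G x y :=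
    intervalIntegral.continuous_parametric_intervalIntegral_of_continuous'
      (f := fun x y => c * G x y) (continuous_const.mul hGc) 0 L
  have h3 : ∫ x in (0:ℝ)..L, |P x| ≤ ∫ x in (0:ℝ)..L, ∫ y in (0:ℝ)..L, c * G x y :=
    intervalIntegral.integral_mono_on hL.le (hPc.abs.intervalIntegrable _ _)
      (hRHSc.intervalIntegrable _ _) h2
  have h4 : (∫ x in (0:ℝ)..L, ∫ y in (0:ℝ)..L, c * G x y) =
      c * ∫ x in (0:ℝ)..L, ∫ y in (0:ℝ)..L, G x y := by
    rw [← intervalIntegral.integral_const_mul]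
    exact intervalIntegral.integral_congr fun x _ => intervalIntegral.integral_const_mul _ _
  -- Cauchy-Schwarz over the square
  set Q : ℝ → ℝ := fun x => ∫ y in (0:ℝ)..L, ∫ s in (0:ℝ)..1, (θz (x, y, s)) ^ 2 with hQdef
  have hQc : Continuous Q :=
    intervalIntegral.continuous_parametric_intervalIntegral_of_continuous'
      (f := fun x y => ∫ s in (0:ℝ)..1, (θz (x, y, s)) ^ 2) hInnc 0 L
  have hQnn : ∀ x, 0 ≤ Q x := fun x =>
    intervalIntegral.integral_nonneg hL.le fun y _ =>
      intervalIntegral.integral_nonneg zero_le_one fun s _ => sq_nonneg _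
  have hGsq : ∀ x y : ℝ, (G x y) ^ 2 = ∫ s in (0:ℝ)..1, (θz (x, y, s)) ^ 2 := fun x y =>
    Real.sq_sqrt (intervalIntegral.integral_nonneg zero_le_one fun s _ => sq_nonneg _)
  have h5 : ∀ x : ℝ, (∫ y in (0:ℝ)..L, G x y) ≤ Real.sqrt L * Real.sqrt (Q x) := by
    intro x
    have e1 : (∫ y in (0:ℝ)..L, G x y) = ∫ y in (0:ℝ)..L, |G x y| :=
      intervalIntegral.integral_congr fun y _ => (abs_of_nonneg (hGnn x y)).symm
    have hGx : Continuous (G x) := by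
      have h := hGc.comp (Continuous.prodMk_right x)
      exact h
    have e2 := cs1 hL.le hGx
    have e3 : (∫ y in (0:ℝ)..L, (G x y) ^ 2) = Q x :=
      intervalIntegral.integral_congr fun y _ => hGsq x y
    rw [e1]
    refine e2.trans ?_
    rw [e3]
  set I := ∫ x in (0:ℝ)..L, Q x with hIdef
  have hInn : 0 ≤ I := intervalIntegral.integral_nonneg hL.le fun x _ => hQnn x
  have h6 : (∫ x in (0:ℝ)..L, ∫ y in (0:ℝ)..L, G x y) ≤
      Real.sqrt L * (Real.sqrt L * Real.sqrt I) := by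
    have hGyc : Continuous fun x : ℝ => ∫ y in (0:ℝ)..L, G x y :=
      intervalIntegral.continuous_parametric_intervalIntegral_of_continuous'
        (f := fun x y => G x y) hGc 0 L
    calc (∫ x in (0:ℝ)..L, ∫ y in (0:ℝ)..L, G x y)
        ≤ ∫ x in (0:ℝ)..L, Real.sqrt L * Real.sqrt (Q x) :=
          intervalIntegral.integral_mono_on hL.le (hGyc.intervalIntegrable _ _)
            ((continuous_const.mul (Real.continuous_sqrt.comp hQc)).intervalIntegrable _ _)
            fun x _ => h5 x
      _ = Real.sqrt L * ∫ x in (0:ℝ)..L, Real.sqrt (Q x) :=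
          intervalIntegral.integral_const_mul _ _
      _ ≤ Real.sqrt L * (Real.sqrt L * Real.sqrt I) := by
          apply mul_le_mul_of_nonneg_left _ (Real.sqrt_nonneg L)
          have e1 : (∫ x in (0:ℝ)..L, Real.sqrt (Q x)) =
              ∫ x in (0:ℝ)..L, |Real.sqrt (Q x)| :=
            intervalIntegral.integral_congr fun x _ => (abs_of_nonneg (Real.sqrt_nonneg _)).symm
          have e2 := cs1 hL.le (g := fun x => Real.sqrt (Q x)) (Real.continuous_sqrt.comp hQc)
          have e3 : (∫ x in (0:ℝ)..L, (Real.sqrt (Q x)) ^ 2) = I :=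
            intervalIntegral.integral_congr fun x _ => Real.sq_sqrt (hQnn x)
          rw [e1]
          rw [e3] at e2
          exact e2
  have main : |∫ x in (0:ℝ)..L, P x| ≤ c * (L * Real.sqrt I) := by
    refine h1.trans (h3.trans ?_)
    rw [h4]
    calc c * (∫ x in (0:ℝ)..L, ∫ y in (0:ℝ)..L, G x y)
        ≤ c * (Real.sqrt L * (Real.sqrt L * Real.sqrt I)) := mul_le_mul_of_nonneg_left h6 hcnn
      _ = c * (L * Real.sqrt I) := by
          rw [show Real.sqrt L * (Real.sqrt L * Real.sqrt I)
              = Real.sqrt L * Real.sqrt L * Real.sqrt I by ring, Real.mul_self_sqrt hL.le]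
  -- compare I with the gradient integral
  have hθdiff : Differentiable ℝ Θ := hθ.differentiable one_ne_zero
  have hgrad_eq : ∀ x y s : ℝ, gradSq θ x y s =
      (pd1 Θ (x, y, s)) ^ 2 + (pd2 Θ (x, y, s)) ^ 2 + (θz (x, y, s)) ^ 2 := by
    intro x y s
    have e1 : deriv (fun t => θ t y s) x = pd1 Θ (x, y, s) :=
      (hasDerivAt_slice1 Θ hθdiff x y s).deriv
    have e2 : deriv (fun t => θ x t s) y = pd2 Θ (x, y, s) :=
      (hasDerivAt_slice2 Θ hθdiff x y s).deriv
    have e3 : deriv (fun t => θ x y t) s = θz (x, y, s) := (hderiv_θ x y s).deriv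
    unfold gradSq
    rw [e1, e2, e3]
  set g3 : ℝ × ℝ × ℝ → ℝ := fun p => (pd1 Θ p) ^ 2 + (pd2 Θ p) ^ 2 + (θz p) ^ 2 with hg3def
  have hg3c : Continuous g3 :=
    (((continuous_pd1 Θ hθ).pow 2).add ((continuous_pd2 Θ hθ).pow 2)).add (hθzC.pow 2)
  have hg3ge : ∀ p : ℝ × ℝ × ℝ, (θz p) ^ 2 ≤ g3 p := by
    intro p
    simp only [hg3def]
    nlinarith [sq_nonneg (pd1 Θ p), sq_nonneg (pd2 Θ p)]
  have hInn2c : Continuous fun p : ℝ × ℝ => ∫ s in (0:ℝ)..1, g3 (p.1, p.2, s) :=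
    intervalIntegral.continuous_parametric_intervalIntegral_of_continuous'
      (f := fun p : ℝ × ℝ => fun s => g3 (p.1, p.2, s)) (hg3c.comp hmap3) 0 1
  have hMid2c : Continuous fun x : ℝ => ∫ y in (0:ℝ)..L, ∫ s in (0:ℝ)..1, g3 (x, y, s) :=
    intervalIntegral.continuous_parametric_intervalIntegral_of_continuous'
      (f := fun x y => ∫ s in (0:ℝ)..1, g3 (x, y, s)) hInn2c 0 L
  have inner8 : ∀ x y : ℝ,
      (∫ s in (0:ℝ)..1, (θz (x, y, s)) ^ 2) ≤ ∫ s in (0:ℝ)..1, g3 (x, y, s) := by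
    intro x y
    exact intervalIntegral.integral_mono_on zero_le_one
      (((hθz_slice_cont x y).pow 2).intervalIntegrable _ _)
      ((hg3c.comp (hcurve3 x y)).intervalIntegrable _ _)
      fun s _ => hg3ge (x, y, s)
  have mid8 : ∀ x : ℝ, Q x ≤ ∫ y in (0:ℝ)..L, ∫ s in (0:ℝ)..1, g3 (x, y, s) := by
    intro x
    have int1 : IntervalIntegrable (fun y => ∫ s in (0:ℝ)..1, (θz (x, y, s)) ^ 2) volume 0 L := by
      have h := (hInnc.comp (Continuous.prodMk_right x)).intervalIntegrable (μ := volume) (0:ℝ) L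
      exact h
    have int2 : IntervalIntegrable (fun y => ∫ s in (0:ℝ)..1, g3 (x, y, s)) volume 0 L := by
      have h := (hInn2c.comp (Continuous.prodMk_right x)).intervalIntegrable (μ := volume) (0:ℝ) L
      exact h
    exact intervalIntegral.integral_mono_on hL.le int1 int2 fun y _ => inner8 x y
  have outer8 : I ≤ ∫ x in (0:ℝ)..L, ∫ y in (0:ℝ)..L, ∫ s in (0:ℝ)..1, g3 (x, y, s) :=
    intervalIntegral.integral_mono_on hL.le (hQc.intervalIntegrable _ _)
      (hMid2c.intervalIntegrable _ _) fun x _ => mid8 x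
  have ecell : (∫ x in (0:ℝ)..L, ∫ y in (0:ℝ)..L, ∫ s in (0:ℝ)..1, gradSq θ x y s) =
      ∫ x in (0:ℝ)..L, ∫ y in (0:ℝ)..L, ∫ s in (0:ℝ)..1, g3 (x, y, s) :=
    intervalIntegral.integral_congr fun x _ => intervalIntegral.integral_congr fun y _ =>
      intervalIntegral.integral_congr fun s _ => hgrad_eq x y s
  have h8 : (1 / L ^ 2) * I ≤ cellAvg L (gradSq θ) := by
    unfold cellAvg
    rw [ecell]
    exact mul_le_mul_of_nonneg_left outer8 (by positivity)
  have hz52 : z ^ ((5:ℝ)/2) = z ^ 2 * Real.sqrt z := by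
    have h2' : z ^ (2:ℝ) = z ^ 2 := by
      rw [show (2:ℝ) = ((2:ℕ):ℝ) by norm_num, Real.rpow_natCast]
    rw [show ((5:ℝ)/2) = (2:ℝ) + 1/2 by norm_num, Real.rpow_add' hz0 (by norm_num), h2',
      ← Real.sqrt_eq_rpow]
  have hsqrtI : Real.sqrt ((1 / L ^ 2) * I) = (1 / L) * Real.sqrt I := by
    rw [Real.sqrt_mul (by positivity) I, show (1:ℝ) / L ^ 2 = (1 / L) ^ 2 by ring,
      Real.sqrt_sq (by positivity)]
  calc |(1 / L ^ 2) * ∫ x in (0:ℝ)..L, P x|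
      = (1 / L ^ 2) * |∫ x in (0:ℝ)..L, P x| := by
        rw [abs_mul, abs_of_pos (by positivity : (0:ℝ) < 1 / L ^ 2)]
    _ ≤ (1 / L ^ 2) * (c * (L * Real.sqrt I)) :=
        mul_le_mul_of_nonneg_left main (by positivity)
    _ = c * ((1 / L) * Real.sqrt I) := by field_simp
    _ = c * Real.sqrt ((1 / L ^ 2) * I) := by rw [hsqrtI]
    _ ≤ c * Real.sqrt (cellAvg L (gradSq θ)) :=
        mul_le_mul_of_nonneg_left (Real.sqrt_le_sqrt h8) hcnn
    _ ≤ z ^ ((5:ℝ)/2) * M * Real.sqrt (cellAvg L (gradSq θ)) := by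
        apply mul_le_mul_of_nonneg_right _ (Real.sqrt_nonneg _)
        rw [hz52, hcdef]
        nlinarith [mul_nonneg (mul_nonneg hM0 (sq_nonneg z)) (Real.sqrt_nonneg z)]
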